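/- arXiv:1702.01192 — 3 statements merged into one kernel-verified Lean document; each statement's English description precedes it below -/
import Mathlib

section
/- Let r>0 and let α>0, β>0 be such that β ≠ -c_m·α - c_m^2 for every integer m≥1, where c_m = -(π/r)^2·((2m-1)/4)^2. If x is a four times continuously differentiable real function on [-r,r] satisfying x''''(s) + α·x''(s) + β·x(s) = 0 for all s ∈ [-r,r], x'(-r) = x'''(-r) = 0 and x(r) = x''(r) = 0, then x(s) = 0 for all s ∈ [-r,r]. -/
/-!
Over `ℂ` factor `z ^ 2 + α z + β = (z - w₁ ^ 2) (z - w₂ ^ 2)`, so that the equation becomes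
`(D² - w₁²) (D² - w₂²) x = 0`. Each factor is a second order problem `y'' = w² y`, `y'(a) = 0`,
`y(b) = 0`, whose solutions are `y(a) cosh (w (s - a))` (two Wronskians against `cosh` and `sinh`
are constant), hence vanish as soon as `cosh (w (b - a)) ≠ 0`; apply this first to
`x'' - w₂² x` and then to `x`. On `[-r, r]`, `cosh (2 r w) = 0` forces `w ^ 2 = c_m` for some
`m ≥ 1`, and a root `w ^ 2 = c_m` of `z ^ 2 + α z + β` means that `(α, β)` lies on `l_m`.
-/

open Real Set

lemma eq_left_of_hasDerivAt_zero {E : Type*} [NormedAddCommGroup E] [NormedSpace ℝ E]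
    {f : ℝ → E} {a b : ℝ} (hf : ∀ s ∈ Icc a b, HasDerivAt f 0 s) :
    ∀ s ∈ Icc a b, f s = f a :=
  constant_of_has_deriv_right_zero (fun s hs => (hf s hs).continuousAt.continuousWithinAt)
    fun s hs => (hf s (Ico_subset_Icc_self hs)).hasDerivWithinAt

lemma hasDerivAt_cosh_mul_sub (w : ℂ) (a s : ℝ) :
    HasDerivAt (fun t : ℝ => Complex.cosh (w * (t - a))) (w * Complex.sinh (w * (s - a))) s := by
  have h := ((Complex.hasDerivAt_cosh _).comp (s : ℂ)
    (((hasDerivAt_id (s : ℂ)).sub_const (a : ℂ)).const_mul w)).comp_ofReal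
  simpa [mul_comm] using h

lemma hasDerivAt_sinh_mul_sub (w : ℂ) (a s : ℝ) :
    HasDerivAt (fun t : ℝ => Complex.sinh (w * (t - a))) (w * Complex.cosh (w * (s - a))) s := by
  have h := ((Complex.hasDerivAt_sinh _).comp (s : ℂ)
    (((hasDerivAt_id (s : ℂ)).sub_const (a : ℂ)).const_mul w)).comp_ofReal
  simpa [mul_comm] using h

section SecondOrder

variable {a b : ℝ} {w : ℂ} {y y' : ℝ → ℂ}

lemma eq_mul_cosh_of_hasDerivAt (hw : w ≠ 0) (hy : ∀ s ∈ Icc a b, HasDerivAt y (y' s) s)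
    (hy' : ∀ s ∈ Icc a b, HasDerivAt y' (w ^ 2 * y s) s) (ha : y' a = 0) :
    ∀ s ∈ Icc a b, y s = y a * Complex.cosh (w * (s - a)) := by
  set C : ℝ → ℂ := fun s => Complex.cosh (w * (s - a))
  set S : ℝ → ℂ := fun s => Complex.sinh (w * (s - a))
  have hW : ∀ s ∈ Icc a b, y s * (w * S s) - y' s * C s = y a * (w * S a) - y' a * C a :=
    eq_left_of_hasDerivAt_zero (f := fun t => y t * (w * S t) - y' t * C t) fun s hs =>
      (((hy s hs).mul ((hasDerivAt_sinh_mul_sub w a s).const_mul w)).sub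
        ((hy' s hs).mul (hasDerivAt_cosh_mul_sub w a s))).congr_deriv (by ring)
  have hV : ∀ s ∈ Icc a b, y s * (w * C s) - y' s * S s = y a * (w * C a) - y' a * S a :=
    eq_left_of_hasDerivAt_zero (f := fun t => y t * (w * C t) - y' t * S t) fun s hs =>
      (((hy s hs).mul ((hasDerivAt_cosh_mul_sub w a s).const_mul w)).sub
        ((hy' s hs).mul (hasDerivAt_sinh_mul_sub w a s))).congr_deriv (by ring)
  intro s hs
  have hCS : C s ^ 2 - S s ^ 2 = 1 := Complex.cosh_sq_sub_sinh_sq _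
  have hW := hW s hs
  have hV := hV s hs
  simp only [C, S, sub_self, mul_zero, Complex.sinh_zero, Complex.cosh_zero, ha] at hW hV
  apply mul_right_cancel₀ hw
  linear_combination C s * hV - S s * hW - y s * w * hCS

lemma eq_zero_of_hasDerivAt (hw : w ≠ 0) (hcosh : Complex.cosh (w * (b - a)) ≠ 0)
    (hy : ∀ s ∈ Icc a b, HasDerivAt y (y' s) s)
    (hy' : ∀ s ∈ Icc a b, HasDerivAt y' (w ^ 2 * y s) s) (ha : y' a = 0) (hb : y b = 0) :
    ∀ s ∈ Icc a b, y s = 0 := by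
  have hrep := eq_mul_cosh_of_hasDerivAt hw hy hy' ha
  intro s hs
  have hya : y a = 0 := by
    have hab : b ∈ Icc a b := right_mem_Icc.mpr (hs.1.trans hs.2)
    simpa [hb, hcosh] using (hrep b hab).symm
  simp [hrep s hs, hya]

end SecondOrder

lemma eq_zero_of_fourth_order {a b : ℝ} {w₁ w₂ : ℂ} (hw₁ : w₁ ≠ 0) (hw₂ : w₂ ≠ 0)
    (hcosh₁ : Complex.cosh (w₁ * (b - a)) ≠ 0) (hcosh₂ : Complex.cosh (w₂ * (b - a)) ≠ 0)
    {u : ℕ → ℝ → ℂ} (hu : ∀ n < 4, ∀ s ∈ Icc a b, HasDerivAt (u n) (u (n + 1) s) s)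
    (hode : ∀ s ∈ Icc a b, u 4 s - (w₁ ^ 2 + w₂ ^ 2) * u 2 s + w₁ ^ 2 * w₂ ^ 2 * u 0 s = 0)
    (h1 : u 1 a = 0) (h3 : u 3 a = 0) (h0 : u 0 b = 0) (h2 : u 2 b = 0) :
    ∀ s ∈ Icc a b, u 0 s = 0 := by
  have hy : ∀ s ∈ Icc a b, u 2 s - w₂ ^ 2 * u 0 s = 0 :=
    eq_zero_of_hasDerivAt (y' := fun s => u 3 s - w₂ ^ 2 * u 1 s) hw₁ hcosh₁
      (fun s hs => (hu 2 (by norm_num) s hs).sub ((hu 0 (by norm_num) s hs).const_mul _))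
      (fun s hs => ((hu 3 (by norm_num) s hs).sub
        ((hu 1 (by norm_num) s hs).const_mul _)).congr_deriv (by linear_combination hode s hs))
      (by simp [h1, h3]) (by simp [h0, h2])
  exact eq_zero_of_hasDerivAt hw₂ hcosh₂ (hu 0 (by norm_num))
    (fun s hs => (hu 1 (by norm_num) s hs).congr_deriv (by linear_combination hy s hs)) h1 h0

lemma Complex.exists_sq_add_sq_eq_and_sq_mul_sq_eq (s t : ℂ) :
    ∃ w₁ w₂ : ℂ, w₁ ^ 2 + w₂ ^ 2 = s ∧ w₁ ^ 2 * w₂ ^ 2 = t := by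
  obtain ⟨d, hd⟩ := IsAlgClosed.exists_eq_mul_self (s ^ 2 - 4 * t)
  obtain ⟨w₁, hw₁⟩ := IsAlgClosed.exists_eq_mul_self ((s + d) / 2)
  obtain ⟨w₂, hw₂⟩ := IsAlgClosed.exists_eq_mul_self ((s - d) / 2)
  exact ⟨w₁, w₂, by linear_combination -hw₁ - hw₂,
    by linear_combination (-(s - d) / 2) * hw₁ - w₁ * w₁ * hw₂ + hd / 4⟩

lemma exists_nat_sq_two_mul_sub_one_eq (k : ℤ) :
    ∃ m : ℕ, 1 ≤ m ∧ (2 * (m : ℝ) - 1) ^ 2 = (2 * k + 1) ^ 2 := by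
  rcases k with n | n
  · exact ⟨n + 1, by omega, by simp only [Int.ofNat_eq_natCast]; push_cast; ring⟩
  · exact ⟨n + 1, by omega, by push_cast [Int.negSucc_eq]; ring⟩

lemma exists_sq_eq_of_cosh_eq_zero {r : ℝ} (hr : r ≠ 0) {w : ℂ}
    (h : Complex.cosh (w * (2 * r)) = 0) :
    ∃ m : ℕ, 1 ≤ m ∧ w ^ 2 = ((-(π / r) ^ 2 * ((2 * (m : ℝ) - 1) / 4) ^ 2 : ℝ) : ℂ) := by
  rw [← Complex.cos_mul_I, Complex.cos_eq_zero_iff] at h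
  obtain ⟨k, hk⟩ := h
  obtain ⟨m, hm, hsq⟩ := exists_nat_sq_two_mul_sub_one_eq k
  refine ⟨m, hm, ?_⟩
  have hsq : (2 * (m : ℂ) - 1) ^ 2 = (2 * k + 1) ^ 2 := by exact_mod_cast hsq
  have hrC : (r : ℂ) ≠ 0 := by exact_mod_cast hr
  push_cast
  field_simp
  linear_combination
    (-4 : ℂ) * congrArg (· ^ 2) hk + π ^ 2 * hsq + 16 * r ^ 2 * w ^ 2 * Complex.I_sq

theorem stmt_1_general (r : ℝ) (hr : 0 < r)
    (c : ℕ → ℝ)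
    (hc : ∀ m : ℕ, c m = -(π / r) ^ 2 * ((2 * (m : ℝ) - 1) / 4) ^ 2)
    (α β : ℝ) (hβ : 0 < β)
    (hray : ∀ m : ℕ, 1 ≤ m → β ≠ -(c m) * α - (c m) ^ 2)
    (x : ℝ → ℝ) (hx : ContDiff ℝ 4 x)
    (hode : ∀ s ∈ Icc (-r) r,
      iteratedDeriv 4 x s + α * iteratedDeriv 2 x s + β * x s = 0)
    (hbc1 : iteratedDeriv 1 x (-r) = 0) (hbc2 : iteratedDeriv 3 x (-r) = 0)
    (hbc3 : x r = 0) (hbc4 : iteratedDeriv 2 x r = 0) :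
    ∀ s ∈ Icc (-r) r, x s = 0 := by
  obtain ⟨w₁, w₂, hsum, hprod⟩ := Complex.exists_sq_add_sq_eq_and_sq_mul_sq_eq (-α) β
  have hβC : (β : ℂ) ≠ 0 := by exact_mod_cast hβ.ne'
  have hw₁ : w₁ ≠ 0 := by rintro rfl; simp [eq_comm, hβC] at hprod
  have hw₂ : w₂ ≠ 0 := by rintro rfl; simp [eq_comm, hβC] at hprod
  have hcosh : ∀ w : ℂ, (w ^ 2) ^ 2 + α * w ^ 2 + β = 0 →
      Complex.cosh (w * (r - (-r : ℝ))) ≠ 0 := by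
    intro w hroot h
    rw [show (r : ℂ) - (-r : ℝ) = 2 * r by push_cast; ring] at h
    obtain ⟨m, hm, hwm⟩ := exists_sq_eq_of_cosh_eq_zero hr.ne' h
    rw [hwm, ← hc m] at hroot
    have hroot : c m ^ 2 + α * c m + β = 0 := by exact_mod_cast hroot
    exact hray m hm (by linarith)
  set u : ℕ → ℝ → ℂ := fun n s => ((iteratedDeriv n x s : ℝ) : ℂ)
  have hu : ∀ n < 4, ∀ s ∈ Icc (-r) r, HasDerivAt (u n) (u (n + 1) s) s := fun n hn s _ => by
    have hdiff := hx.differentiable_iteratedDeriv n (by exact_mod_cast hn)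
    simpa only [u, iteratedDeriv_succ] using (hdiff s).hasDerivAt.ofReal_comp
  have hodeC : ∀ s ∈ Icc (-r) r,
      u 4 s - (w₁ ^ 2 + w₂ ^ 2) * u 2 s + w₁ ^ 2 * w₂ ^ 2 * u 0 s = 0 := fun s hs => by
    rw [hsum, hprod]
    simpa [u] using congrArg (fun t : ℝ => (t : ℂ)) (hode s hs)
  intro s hs
  simpa [u] using eq_zero_of_fourth_order hw₁ hw₂
    (hcosh w₁ (by linear_combination w₁ ^ 2 * hsum - hprod))
    (hcosh w₂ (by linear_combination w₂ ^ 2 * hsum - hprod)) hu hodeC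
    (by simp [u, hbc1]) (by simp [u, hbc2]) (by simp [u, hbc3]) (by simp [u, hbc4]) s hs

/-- If `(α,β)` lies on no ray `l_m`, the linear boundary value problem has only
the trivial solution. -/
theorem stmt_1 (r : ℝ) (hr : 0 < r)
    (c : ℕ → ℝ)
    (hc : ∀ m : ℕ, c m = -(π / r) ^ 2 * ((2 * (m : ℝ) - 1) / 4) ^ 2)
    (α β : ℝ) (hα : 0 < α) (hβ : 0 < β)
    (hray : ∀ m : ℕ, 1 ≤ m → β ≠ -(c m) * α - (c m) ^ 2)
    (x : ℝ → ℝ) (hx : ContDiff ℝ 4 x)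
    (hode : ∀ s ∈ Icc (-r) r,
      iteratedDeriv 4 x s + α * iteratedDeriv 2 x s + β * x s = 0)
    (hbc1 : iteratedDeriv 1 x (-r) = 0) (hbc2 : iteratedDeriv 3 x (-r) = 0)
    (hbc3 : x r = 0) (hbc4 : iteratedDeriv 2 x r = 0) :
    ∀ s ∈ Icc (-r) r, x s = 0 :=
  stmt_1_general r hr c hc α β hβ hray x hx hode hbc1 hbc2 hbc3 hbc4
end

section
/- Let r>0, let α>0, β>0, and suppose there is exactly one integer m≥1 with β = -c_m·α - c_m^2 (i.e. (α,β) lies on the ray l_m and on no other ray l_k, k≠m), where c_m = -(π/r)^2·((2m-1)/4)^2. Then every four times continuously differentiable function x on [-r,r] satisfying x'''' + α·x'' + β·x = 0 on [-r,r], x'(-r) = x'''(-r) = 0 and x(r) = x''(r) = 0 is a scalar multiple of e_m(s) = 2·cos(ω_m(s+r)), where ω_m = ((2m-1)π)/(4r). In particular the solution space of the linear boundary value problem is one-dimensional. -/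
/-!
Write `α = ω² + μ²`, `β = ω² μ²`, so that `D⁴ + αD² + β = (D² + μ²)(D² + ω²)`; `β > 0` makes `μ`
real. With `t = s + r`, `y = x'' + ω² x` solves `y'' + μ² y = 0`, `y'(-r) = 0`, hence
`y = y(-r) cos(μt)`. If `cos(2μr) ≠ 0`, the condition `y(r) = 0` gives `y = 0`. Otherwise `μ` is
one of the frequencies `ω_k`, and uniqueness of the ray through `(α, β)` forces `μ = ω`. Either way
`x'' + ω² x = A cos(ωt)`, so `x = x(-r) cos(ωt) + (A/2ω) t sin(ωt)`, and `x(r) = 0 = cos(2ωr)`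
forces `A = 0`.
-/

open Real Set

theorem ContDiff.hasDerivAt_iteratedDeriv {n k : ℕ} {f : ℝ → ℝ} (hf : ContDiff ℝ n f)
    (hk : k < n) (s : ℝ) : HasDerivAt (iteratedDeriv k f) (iteratedDeriv (k + 1) f s) s := by
  rw [iteratedDeriv_succ]
  exact (hf.differentiable_iteratedDeriv k (by exact_mod_cast hk) s).hasDerivAt

section Harmonic

variable {ν a b : ℝ} {y y' : ℝ → ℝ}

theorem eq_zero_of_hasDerivAt_harmonic (hν : ν ≠ 0)
    (hy : ∀ t ∈ Icc a b, HasDerivAt y (y' t) t)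
    (hy' : ∀ t ∈ Icc a b, HasDerivAt y' (-(ν ^ 2 * y t)) t)
    (h0 : y a = 0) (h1 : y' a = 0) : ∀ t ∈ Icc a b, y t = 0 := by
  -- the energy `y'² + ν² y²` is conserved
  set E : ℝ → ℝ := fun t => y' t ^ 2 + ν ^ 2 * y t ^ 2
  have hE : ∀ t ∈ Icc a b, HasDerivAt E 0 t := fun t ht => by
    refine (((hy' t ht).pow 2).add (((hy t ht).pow 2).const_mul (ν ^ 2))).congr_deriv ?_
    push_cast
    ring
  have hE_const := constant_of_has_deriv_right_zero
    (fun t ht => (hE t ht).continuousAt.continuousWithinAt)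
    (fun t ht => (hE t (Ico_subset_Icc_self ht)).hasDerivWithinAt)
  intro t ht
  have hEt : y' t ^ 2 + ν ^ 2 * y t ^ 2 = 0 := by simpa [E, h0, h1] using hE_const t ht
  have : ν ^ 2 * y t ^ 2 = 0 := by nlinarith [sq_nonneg (y' t), sq_nonneg (ν * y t)]
  simpa [hν] using this

theorem eq_cos_add_mul_sin_of_hasDerivAt_forced (hν : ν ≠ 0) (A : ℝ)
    (hy : ∀ t ∈ Icc a b, HasDerivAt y (y' t) t)
    (hy' : ∀ t ∈ Icc a b, HasDerivAt y' (A * cos (ν * (t - a)) - ν ^ 2 * y t) t)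
    (h1 : y' a = 0) :
    ∀ t ∈ Icc a b,
      y t = y a * cos (ν * (t - a)) + A / (2 * ν) * ((t - a) * sin (ν * (t - a))) := by
  have hθ : ∀ t, HasDerivAt (fun t => ν * (t - a)) ν t := fun t => by
    simpa using ((hasDerivAt_id t).sub_const a).const_mul ν
  have hsub := eq_zero_of_hasDerivAt_harmonic hν (a := a) (b := b)
    (y := fun t => y t - y a * cos (ν * (t - a)) - A / (2 * ν) * ((t - a) * sin (ν * (t - a))))
    (y' := fun t => y' t + y a * ν * sin (ν * (t - a))
      - A / (2 * ν) * (sin (ν * (t - a)) + ν * (t - a) * cos (ν * (t - a))))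
    (fun t ht => by
      refine (((hy t ht).sub ((hθ t).cos.const_mul (y a))).sub
        ((((hasDerivAt_id t).sub_const a).mul (hθ t).sin).const_mul (A / (2 * ν)))).congr_deriv ?_
      simp only [id]
      field_simp
      ring)
    (fun t ht => by
      refine (((hy' t ht).add ((hθ t).sin.const_mul (y a * ν))).sub
        (((hθ t).sin.add ((((hasDerivAt_id t).sub_const a).const_mul ν).mul (hθ t).cos)).const_mul
          (A / (2 * ν)))).congr_deriv ?_
      simp only [id]
      field_simp
      ring)
    (by simp) (by simp [h1])
  intro t ht
  linarith [hsub t ht]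

end Harmonic

-- the paper's `ω_k`, with `c_k = -ω_k ^ 2`
noncomputable def oddFrequency (r : ℝ) (k : ℕ) : ℝ := (2 * (k : ℝ) - 1) * π / (4 * r)

theorem cos_oddFrequency_mul_add_self {r : ℝ} (hr : r ≠ 0) (k : ℕ) :
    cos (oddFrequency r k * (r + r)) = 0 := by
  rw [cos_eq_zero_iff]
  exact ⟨(k : ℤ) - 1, by simp only [oddFrequency]; push_cast; field_simp; ring⟩

theorem exists_eq_oddFrequency_of_cos_mul_add_self_eq_zero {r ν : ℝ} (hr : 0 < r) (hν : 0 < ν)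
    (h : cos (ν * (r + r)) = 0) : ∃ k : ℕ, 1 ≤ k ∧ ν = oddFrequency r k := by
  obtain ⟨k, hk⟩ := cos_eq_zero_iff.1 h
  have hk0 : 0 ≤ k := by
    by_contra! hneg
    have : (k : ℝ) ≤ -1 := by exact_mod_cast Int.le_sub_one_of_lt hneg
    nlinarith [pi_pos, mul_pos hν hr]
  lift k to ℕ using hk0
  refine ⟨k + 1, by omega, ?_⟩
  simp only [oddFrequency]
  push_cast at hk ⊢
  field_simp
  linarith

theorem oddFrequency_pos {r : ℝ} (hr : 0 < r) {k : ℕ} (hk : 1 ≤ k) : 0 < oddFrequency r k := by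
  have : (1 : ℝ) ≤ k := by exact_mod_cast hk
  exact div_pos (by nlinarith [pi_pos]) (by linarith)

theorem iteratedDeriv_two_add_eq_mul_cos {x : ℝ → ℝ} {a b ω μ : ℝ} (hμ : μ ≠ 0)
    (hx : ContDiff ℝ 4 x)
    (hode : ∀ s ∈ Icc a b, iteratedDeriv 4 x s + (ω ^ 2 + μ ^ 2) * iteratedDeriv 2 x s
      + ω ^ 2 * μ ^ 2 * x s = 0)
    (h1 : iteratedDeriv 1 x a = 0) (h3 : iteratedDeriv 3 x a = 0) :
    ∀ s ∈ Icc a b, iteratedDeriv 2 x s + ω ^ 2 * x s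
      = (iteratedDeriv 2 x a + ω ^ 2 * x a) * cos (μ * (s - a)) := by
  have hd : ∀ k < 4, ∀ s, HasDerivAt (iteratedDeriv k x) (iteratedDeriv (k + 1) x s) s :=
    fun k hk s => hx.hasDerivAt_iteratedDeriv (by exact_mod_cast hk) s
  have hx' : ∀ s, HasDerivAt x (iteratedDeriv 1 x s) s := fun s => by
    simpa using hd 0 (by norm_num) s
  intro s hs
  simpa using eq_cos_add_mul_sin_of_hasDerivAt_forced hμ 0
    (y := fun s => iteratedDeriv 2 x s + ω ^ 2 * x s)
    (y' := fun s => iteratedDeriv 3 x s + ω ^ 2 * iteratedDeriv 1 x s)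
    (fun s _ => (hd 2 (by norm_num) s).add ((hx' s).const_mul (ω ^ 2)))
    (fun s hs => ((hd 3 (by norm_num) s).add ((hd 1 (by norm_num) s).const_mul (ω ^ 2))).congr_deriv
      (by linear_combination hode s hs))
    (by simp [h1, h3]) s hs

theorem eq_mul_cos_of_forced_of_eq_zero {x : ℝ → ℝ} {a b ω A : ℝ} (hab : a < b) (hω : ω ≠ 0)
    (hx : ContDiff ℝ 2 x)
    (hforce : ∀ s ∈ Icc a b, iteratedDeriv 2 x s + ω ^ 2 * x s = A * cos (ω * (s - a)))
    (h1 : iteratedDeriv 1 x a = 0) (hb : x b = 0) (hcos : cos (ω * (b - a)) = 0) :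
    ∀ s ∈ Icc a b, x s = x a * cos (ω * (s - a)) := by
  have hxsol := eq_cos_add_mul_sin_of_hasDerivAt_forced hω A (y := x) (y' := iteratedDeriv 1 x)
    (fun s _ => by simpa using hx.hasDerivAt_iteratedDeriv (k := 0) (by norm_num) s)
    (fun s hs => (hx.hasDerivAt_iteratedDeriv (k := 1) (by norm_num) s).congr_deriv
      (by linarith [hforce s hs]))
    h1
  have hA : A = 0 := by
    have hsin : sin (ω * (b - a)) ≠ 0 := by
      intro h; simpa [h, hcos] using sin_sq_add_cos_sq (ω * (b - a))
    have hxb := hxsol b ⟨hab.le, le_rfl⟩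
    rw [hcos, hb] at hxb
    have : A / (2 * ω) * (b - a) * sin (ω * (b - a)) = 0 := by linarith
    simpa [hω, sub_ne_zero.2 hab.ne'] using (mul_eq_zero.1 this).resolve_right hsin
  intro s hs
  simpa [hA] using hxsol s hs

theorem stmt_2_general (r : ℝ) (hr : 0 < r)
    (c : ℕ → ℝ)
    (hc : ∀ k : ℕ, c k = -(π / r) ^ 2 * ((2 * (k : ℝ) - 1) / 4) ^ 2)
    (α β : ℝ) (hβ : 0 < β)
    (m : ℕ) (hm : 1 ≤ m) (hray : β = -(c m) * α - (c m) ^ 2)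
    (huniq : ∀ k : ℕ, 1 ≤ k → β = -(c k) * α - (c k) ^ 2 → k = m)
    (ω : ℝ) (hω : ω = ((2 * (m : ℝ) - 1) * π) / (4 * r))
    (x : ℝ → ℝ) (hx : ContDiff ℝ 4 x)
    (hode : ∀ s ∈ Icc (-r) r,
      iteratedDeriv 4 x s + α * iteratedDeriv 2 x s + β * x s = 0)
    (hbc1 : iteratedDeriv 1 x (-r) = 0) (hbc2 : iteratedDeriv 3 x (-r) = 0)
    (hbc3 : x r = 0) (hbc4 : iteratedDeriv 2 x r = 0) :
    ∃ a : ℝ, ∀ s ∈ Icc (-r) r, x s = a * (2 * Real.cos (ω * (s + r))) := by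
  replace hω : ω = oddFrequency r m := by rw [hω, oddFrequency, mul_div_assoc]
  have hc_eq : ∀ k, c k = -oddFrequency r k ^ 2 := fun k => by
    rw [hc, oddFrequency]; field_simp
  obtain ⟨μ, hμ, rfl, rfl⟩ : ∃ μ, 0 < μ ∧ α = ω ^ 2 + μ ^ 2 ∧ β = ω ^ 2 * μ ^ 2 := by
    have hβω : β = ω ^ 2 * (α - ω ^ 2) := by rw [hray, hc_eq, ← hω]; ring
    have hpos : 0 < α - ω ^ 2 := pos_of_mul_pos_right (hβω ▸ hβ) (sq_nonneg ω)
    exact ⟨√(α - ω ^ 2), sqrt_pos.2 hpos, by rw [sq_sqrt hpos.le]; ring,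
      by rw [sq_sqrt hpos.le, hβω]⟩
  have hy := iteratedDeriv_two_add_eq_mul_cos hμ.ne' hx hode hbc1 hbc2
  simp only [sub_neg_eq_add] at hy
  obtain ⟨A, hA⟩ : ∃ A, ∀ s ∈ Icc (-r) r,
      iteratedDeriv 2 x s + ω ^ 2 * x s = A * cos (ω * (s - -r)) := by
    by_cases hres : cos (μ * (r + r)) = 0
    · obtain ⟨k, hk, hμk⟩ := exists_eq_oddFrequency_of_cos_mul_add_self_eq_zero hr hμ hres
      have hμω : μ = ω := by
        rw [hμk, hω, huniq k hk (by rw [hc_eq, ← hμk]; ring)]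
      exact ⟨_, fun s hs => by simpa [hμω] using hy s hs⟩
    · have hyr := hy r ⟨by linarith, le_rfl⟩
      rw [hbc3, hbc4, mul_zero, add_zero, eq_comm, mul_eq_zero] at hyr
      exact ⟨0, fun s hs => by simpa [hyr.resolve_right hres] using hy s hs⟩
  have hcos : cos (ω * (r - -r)) = 0 := by
    rw [sub_neg_eq_add, hω]; exact cos_oddFrequency_mul_add_self hr.ne' m
  have hxsol := eq_mul_cos_of_forced_of_eq_zero (by linarith) (hω ▸ oddFrequency_pos hr hm).ne'
    (hx.of_le (by norm_num)) hA hbc1 hbc3 hcos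
  refine ⟨x (-r) / 2, fun s hs => ?_⟩
  rw [hxsol s hs, sub_neg_eq_add]
  ring

/-- If `(α,β)` lies on exactly one ray `l_m`, then every solution of the linear
boundary value problem is a scalar multiple of `e_m(s) = 2·cos(ω_m(s+r))`. -/
theorem stmt_2 (r : ℝ) (hr : 0 < r)
    (c : ℕ → ℝ)
    (hc : ∀ k : ℕ, c k = -(π / r) ^ 2 * ((2 * (k : ℝ) - 1) / 4) ^ 2)
    (α β : ℝ) (hα : 0 < α) (hβ : 0 < β)
    (m : ℕ) (hm : 1 ≤ m) (hray : β = -(c m) * α - (c m) ^ 2)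
    (huniq : ∀ k : ℕ, 1 ≤ k → β = -(c k) * α - (c k) ^ 2 → k = m)
    (ω : ℝ) (hω : ω = ((2 * (m : ℝ) - 1) * π) / (4 * r))
    (x : ℝ → ℝ) (hx : ContDiff ℝ 4 x)
    (hode : ∀ s ∈ Icc (-r) r,
      iteratedDeriv 4 x s + α * iteratedDeriv 2 x s + β * x s = 0)
    (hbc1 : iteratedDeriv 1 x (-r) = 0) (hbc2 : iteratedDeriv 3 x (-r) = 0)
    (hbc3 : x r = 0) (hbc4 : iteratedDeriv 2 x r = 0) :
    ∃ a : ℝ, ∀ s ∈ Icc (-r) r, x s = a * (2 * Real.cos (ω * (s + r))) :=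
  stmt_2_general r hr c hc α β hβ m hm hray huniq ω hω x hx hode hbc1 hbc2 hbc3 hbc4
end

section
/- Let r>0, let m≥1 be an integer, set c_m = -(π/r)^2·((2m-1)/4)^2, ω_m = ((2m-1)π)/(4r), e_m(s) = 2·cos(ω_m(s+r)), and let α_0>0, β_0>0 satisfy β_0 = -c_m·α_0 - c_m^2 while β_0 ≠ -c_k·α_0 - c_k^2 for every integer k≥1 with k ≠ m. Then for a continuous real function y on [-r,r] the following are equivalent: (i) there exists a four times continuously differentiable function x on [-r,r] with x'''' + α_0·x'' + β_0·x = y on [-r,r], x'(-r) = x'''(-r) = 0 and x(r) = x''(r) = 0; (ii) ∫_{-r}^{r} y(s)·e_m(s) ds = 0. (The range of the linearization at a simple point is the orthogonal complement of its one-dimensional kernel.) -/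
open Real Set intervalIntegral

/-!
On the ray `l_m` we have `β₀ = ω²(α₀ - ω²)`, so with `ν² = α₀ - ω² > 0` the operator factors as
`D⁴ + α₀D² + β₀ = (D² + ω²)(D² + ν²)`.

Necessity is Green's formula: the operator is formally self-adjoint, `e` lies in its kernel and
satisfies the same boundary conditions, so all boundary terms of `∫ (Lx) e` vanish.

Sufficiency solves `u'' + ω²u = y` and then `x'' + ν²x = u`, both with `u'(-r) = 0`, `u(r) = 0`,
by variation of constants. Such a problem `z'' + λ²z = f` is always solvable if `cos (2λr) ≠ 0`,
and otherwise iff `f ⟂ cos (λ(· + r))`. The first problem is resonant, and solvable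
because `y ⟂ e`; adding a multiple of `e` makes `u ⟂ e`. The second is resonant only if `ν = ω_k`
for some `k`, i.e. `(α₀, β₀) ∈ l_k`; then `k = m` by simplicity and `u ⟂ e` makes it solvable.
The boundary conditions on `x''` and `x'''` follow from `x'' = u - ν²x`.
-/

lemma hasDerivAt_cos_mul_sub (ν a s : ℝ) :
    HasDerivAt (fun s => cos (ν * (s - a))) (-ν * sin (ν * (s - a))) s := by
  simpa [mul_comm] using (((hasDerivAt_id s).sub_const a).const_mul ν).cos

lemma hasDerivAt_sin_mul_sub (ν a s : ℝ) :
    HasDerivAt (fun s => sin (ν * (s - a))) (ν * cos (ν * (s - a))) s := by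
  simpa [mul_comm] using (((hasDerivAt_id s).sub_const a).const_mul ν).sin

lemma contDiff_succ_of_hasDerivAt {n : ℕ} {f f' : ℝ → ℝ} (hf : ∀ s, HasDerivAt f (f' s) s)
    (hf' : ContDiff ℝ n f') : ContDiff ℝ (n + 1) f := by
  have hderiv : deriv f = f' := funext fun s => (hf s).deriv
  exact contDiff_succ_iff_deriv.mpr
    ⟨fun s => (hf s).differentiableAt, by simp, hderiv ▸ hf'⟩

lemma exists_nat_eq_of_cos_eq_zero {θ : ℝ} (hθ : 0 < θ) (h : cos θ = 0) :
    ∃ k : ℕ, 1 ≤ k ∧ θ = (2 * k - 1) * π / 2 := by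
  obtain ⟨k, hk⟩ := cos_eq_zero_iff.mp h
  have hk0 : 0 ≤ k := by
    by_contra! hneg
    have : (k : ℝ) ≤ -1 := by exact_mod_cast Int.le_sub_one_of_lt hneg
    nlinarith [pi_pos]
  refine ⟨k.toNat + 1, by omega, ?_⟩
  have hcast : ((k.toNat : ℕ) : ℝ) = k := by exact_mod_cast Int.toNat_of_nonneg hk0
  rw [hk]
  push_cast [hcast]
  ring

lemma integral_cos_mul_sub_sq {ω a b : ℝ} (hω : ω ≠ 0) (hcos : cos (ω * (b - a)) = 0) :
    ∫ t in a..b, cos (ω * (t - a)) * cos (ω * (t - a)) = (b - a) / 2 := by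
  have hsub : ∀ t, ω * (t - a) = ω * t + -(ω * a) := fun t => by ring
  simp_rw [← sq, hsub]
  rw [integral_comp_mul_add (fun t => cos t ^ 2) hω, integral_cos_sq, ← hsub, ← hsub, hcos]
  simp
  field_simp

def IsOscillatorSolution (ν : ℝ) (f x p : ℝ → ℝ) : Prop :=
  (∀ s, HasDerivAt x (p s) s) ∧ ∀ s, HasDerivAt p (f s - ν ^ 2 * x s) s

namespace IsOscillatorSolution

variable {ν ω : ℝ} {f x p : ℝ → ℝ}

lemma continuous (h : IsOscillatorSolution ν f x p) : Continuous x :=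
  continuous_iff_continuousAt.mpr fun s => (h.1 s).continuousAt

lemma add_const_mul {x₀ p₀ : ℝ → ℝ} (h : IsOscillatorSolution ν f x p)
    (h₀ : IsOscillatorSolution ν 0 x₀ p₀) (c : ℝ) :
    IsOscillatorSolution ν f (fun s => x s + c * x₀ s) (fun s => p s + c * p₀ s) :=
  ⟨fun s => (h.1 s).add ((h₀.1 s).const_mul c), fun s =>
    ((h.2 s).add ((h₀.2 s).const_mul c)).congr_deriv (by simp only [Pi.zero_apply]; ring)⟩

lemma fourthOrder {u q Y : ℝ → ℝ} (hx : IsOscillatorSolution ν u x p)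
    (hu : IsOscillatorSolution ω Y u q) (hY : Continuous Y) :
    ContDiff ℝ 4 x ∧ iteratedDeriv 1 x = p ∧ iteratedDeriv 2 x = (fun s => u s - ν ^ 2 * x s) ∧
      iteratedDeriv 3 x = (fun s => q s - ν ^ 2 * p s) ∧
      ∀ s, iteratedDeriv 4 x s + (ω ^ 2 + ν ^ 2) * iteratedDeriv 2 x s + ω ^ 2 * ν ^ 2 * x s
        = Y s := by
  have h3 : ∀ s, HasDerivAt (fun s => u s - ν ^ 2 * x s) (q s - ν ^ 2 * p s) s :=
    fun s => (hu.1 s).sub ((hx.1 s).const_mul _)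
  have h4 : ∀ s, HasDerivAt (fun s => q s - ν ^ 2 * p s)
      ((Y s - ω ^ 2 * u s) - ν ^ 2 * (u s - ν ^ 2 * x s)) s :=
    fun s => (hu.2 s).sub ((hx.2 s).const_mul _)
  have hD1 : iteratedDeriv 1 x = p := by
    rw [iteratedDeriv_one]; exact funext fun s => (hx.1 s).deriv
  have hD2 : iteratedDeriv 2 x = fun s => u s - ν ^ 2 * x s := by
    rw [iteratedDeriv_succ, hD1]; exact funext fun s => (hx.2 s).deriv
  have hD3 : iteratedDeriv 3 x = fun s => q s - ν ^ 2 * p s := by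
    rw [iteratedDeriv_succ, hD2]; exact funext fun s => (h3 s).deriv
  have hD4 : iteratedDeriv 4 x = fun s => (Y s - ω ^ 2 * u s) - ν ^ 2 * (u s - ν ^ 2 * x s) := by
    rw [iteratedDeriv_succ, hD3]; exact funext fun s => (h4 s).deriv
  have hv : Continuous fun s => (Y s - ω ^ 2 * u s) - ν ^ 2 * (u s - ν ^ 2 * x s) := by
    have := hu.continuous; have := hx.continuous; fun_prop
  have hC : ContDiff ℝ (0 + 1 + 1 + 1 + 1) x :=
    contDiff_succ_of_hasDerivAt hx.1 <| contDiff_succ_of_hasDerivAt hx.2 <|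
      contDiff_succ_of_hasDerivAt h3 <| contDiff_succ_of_hasDerivAt h4 <| contDiff_zero.mpr hv
  refine ⟨hC, hD1, hD2, hD3, fun s => ?_⟩
  rw [hD4, hD2]
  ring

end IsOscillatorSolution

lemma isOscillatorSolution_cos (ν a : ℝ) :
    IsOscillatorSolution ν 0 (fun s => cos (ν * (s - a))) (fun s => -ν * sin (ν * (s - a))) :=
  ⟨hasDerivAt_cos_mul_sub ν a, fun s =>
    ((hasDerivAt_sin_mul_sub ν a s).const_mul (-ν)).congr_deriv
      (by simp only [Pi.zero_apply]; ring)⟩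

lemma exists_isOscillatorSolution {ν : ℝ} (hν : ν ≠ 0) {f : ℝ → ℝ} (hf : Continuous f) (a : ℝ) :
    ∃ x p, IsOscillatorSolution ν f x p ∧ p a = 0 ∧
      ∀ s, x s = ν⁻¹ * ∫ t in a..s, sin (ν * (s - t)) * f t := by
  set C : ℝ → ℝ := fun t => cos (ν * (t - a))
  set S : ℝ → ℝ := fun t => sin (ν * (t - a))
  have hCf : Continuous fun t => C t * f t := by fun_prop
  have hSf : Continuous fun t => S t * f t := by fun_prop
  set F : ℝ → ℝ := fun s => ∫ t in a..s, C t * f t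
  set G : ℝ → ℝ := fun s => ∫ t in a..s, S t * f t
  have hF : ∀ s, HasDerivAt F (C s * f s) s := fun s =>
    (hCf.integral_hasStrictDerivAt a s).hasDerivAt
  have hG : ∀ s, HasDerivAt G (S s * f s) s := fun s =>
    (hSf.integral_hasStrictDerivAt a s).hasDerivAt
  refine ⟨fun s => ν⁻¹ * (S s * F s - C s * G s), fun s => C s * F s + S s * G s,
    ⟨fun s => ?_, fun s => ?_⟩, by simp [F, G], fun s => ?_⟩
  · refine ((((hasDerivAt_sin_mul_sub ν a s).mul (hF s)).sub
      ((hasDerivAt_cos_mul_sub ν a s).mul (hG s))).const_mul ν⁻¹).congr_deriv ?_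
    field_simp
    ring
  · refine (((hasDerivAt_cos_mul_sub ν a s).mul (hF s)).add
      ((hasDerivAt_sin_mul_sub ν a s).mul (hG s))).congr_deriv ?_
    have hpyth := sin_sq_add_cos_sq (ν * (s - a))
    field_simp
    linear_combination (f s) * hpyth
  · have hsplit : ∀ t, sin (ν * (s - t)) * f t = S s * (C t * f t) - C s * (S t * f t) := by
      intro t
      rw [show ν * (s - t) = ν * (s - a) - ν * (t - a) by ring, sin_sub]
      ring
    simp_rw [hsplit]
    rw [integral_sub ((hCf.intervalIntegrable a s).const_mul _)
      ((hSf.intervalIntegrable a s).const_mul _), integral_const_mul, integral_const_mul]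

lemma exists_isOscillatorSolution_boundary {ν : ℝ} (hν : ν ≠ 0)
    {f : ℝ → ℝ} (hf : Continuous f) (a b : ℝ)
    (hres : cos (ν * (b - a)) = 0 → ∫ t in a..b, f t * cos (ν * (t - a)) = 0) :
    ∃ x p, IsOscillatorSolution ν f x p ∧ p a = 0 ∧ x b = 0 := by
  obtain ⟨x₀, p₀, hx₀, hp₀a, hx₀_eq⟩ := exists_isOscillatorSolution hν hf a
  suffices ∃ A, x₀ b + A * cos (ν * (b - a)) = 0 by
    obtain ⟨A, hA⟩ := this
    exact ⟨_, _, hx₀.add_const_mul (isOscillatorSolution_cos ν a) A, by simp [hp₀a], hA⟩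
  by_cases hcos : cos (ν * (b - a)) = 0
  · refine ⟨0, ?_⟩
    have hsin : ∀ t, sin (ν * (b - t)) * f t = sin (ν * (b - a)) * (f t * cos (ν * (t - a))) := by
      intro t
      rw [show ν * (b - t) = ν * (b - a) - ν * (t - a) by ring, sin_sub, hcos]
      ring
    simp_rw [hx₀_eq, hsin, integral_const_mul, hres hcos]
    simp
  · exact ⟨-x₀ b / cos (ν * (b - a)), by field_simp; ring⟩

lemma exists_isOscillatorSolution_boundary_orthogonal {ω a b : ℝ} (hω : ω ≠ 0) (hab : a ≠ b)
    (hcos : cos (ω * (b - a)) = 0) {f : ℝ → ℝ} (hf : Continuous f)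
    (horth : ∫ t in a..b, f t * cos (ω * (t - a)) = 0) :
    ∃ u q, IsOscillatorSolution ω f u q ∧ q a = 0 ∧ u b = 0 ∧
      ∫ t in a..b, u t * cos (ω * (t - a)) = 0 := by
  obtain ⟨u₀, q₀, hu₀, hq₀a, hu₀b⟩ :=
    exists_isOscillatorSolution_boundary hω hf a b fun _ => horth
  set c := -(∫ t in a..b, u₀ t * cos (ω * (t - a))) / ((b - a) / 2)
  refine ⟨_, _, hu₀.add_const_mul (isOscillatorSolution_cos ω a) c, by simp [hq₀a],
    by simp [hu₀b, hcos], ?_⟩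
  have hint : IntervalIntegrable (fun t => u₀ t * cos (ω * (t - a))) MeasureTheory.volume a b :=
    (by have := hu₀.continuous; fun_prop : Continuous _).intervalIntegrable a b
  have hsq : IntervalIntegrable (fun t => cos (ω * (t - a)) * cos (ω * (t - a)))
      MeasureTheory.volume a b := (by fun_prop : Continuous _).intervalIntegrable a b
  simp_rw [add_mul, mul_assoc]
  rw [integral_add hint (hsq.const_mul c), integral_const_mul, integral_cos_mul_sub_sq hω hcos]
  have hhalf : (b - a) / 2 ≠ 0 := by have := sub_ne_zero.mpr hab.symm; positivity
  rw [div_mul_cancel₀ _ hhalf, add_neg_cancel]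

lemma integral_fourthOrder_mul_eq_zero {x g g' : ℝ → ℝ} {a b α ω : ℝ} (hx : ContDiff ℝ 4 x)
    (hg : IsOscillatorSolution ω 0 g g')
    (h1a : iteratedDeriv 1 x a = 0) (h3a : iteratedDeriv 3 x a = 0) (hg'a : g' a = 0)
    (h0b : x b = 0) (h2b : iteratedDeriv 2 x b = 0) (hgb : g b = 0) :
    ∫ s in a..b,
      (iteratedDeriv 4 x s + α * iteratedDeriv 2 x s + ω ^ 2 * (α - ω ^ 2) * x s) * g s = 0 := by
  have hD : ∀ i < 4, ∀ s, HasDerivAt (iteratedDeriv i x) (iteratedDeriv (i + 1) x s) s :=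
    fun i hi s => by
      rw [iteratedDeriv_succ]
      exact ((hx.differentiable_iteratedDeriv i (by exact_mod_cast hi)) s).hasDerivAt
  have hD0 : ∀ s, HasDerivAt x (iteratedDeriv 1 x s) s := by simpa using hD 0 (by norm_num)
  -- Lagrange's bilinear concomitant of `x` and `g`, simplified using `g'' = -ω² g`
  set W : ℝ → ℝ := fun s =>
    iteratedDeriv 3 x s * g s - iteratedDeriv 2 x s * g' s
      + (α - ω ^ 2) * (iteratedDeriv 1 x s * g s - x s * g' s)
  have hW : ∀ s, HasDerivAt W
      ((iteratedDeriv 4 x s + α * iteratedDeriv 2 x s + ω ^ 2 * (α - ω ^ 2) * x s) * g s) s := by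
    intro s
    have hg1 := hg.1 s
    have hg2 := hg.2 s
    refine ((((hD 3 (by norm_num) s).mul hg1).sub ((hD 2 (by norm_num) s).mul hg2)).add
      ((((hD 1 (by norm_num) s).mul hg1).sub ((hD0 s).mul hg2)).const_mul _)).congr_deriv ?_
    simp only [Pi.zero_apply]
    ring
  have hcont : Continuous fun s =>
      (iteratedDeriv 4 x s + α * iteratedDeriv 2 x s + ω ^ 2 * (α - ω ^ 2) * x s) * g s := by
    have := hx.continuous_iteratedDeriv 4 le_rfl
    have := hx.continuous_iteratedDeriv 2 (by norm_num)
    have := hx.continuous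
    have := hg.continuous
    fun_prop
  rw [integral_eq_sub_of_hasDerivAt (fun s _ => hW s) (hcont.intervalIntegrable a b)]
  simp only [W, h1a, h3a, hg'a, h0b, h2b, hgb]
  ring

lemma ContinuousOn.exists_continuous_eqOn_Icc {y : ℝ → ℝ} {a b : ℝ} (hab : a ≤ b)
    (hy : ContinuousOn y (Icc a b)) : ∃ Y : ℝ → ℝ, Continuous Y ∧ EqOn Y y (Icc a b) :=
  ⟨fun s => y (projIcc a b hab s),
    hy.comp_continuous (continuous_subtype_val.comp continuous_projIcc)
      fun s => (projIcc a b hab s).2,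
    fun s hs => by simp [projIcc_of_mem hab hs]⟩

lemma exists_fourthOrder_solution_boundary {a b ω ν : ℝ} (hab : a ≠ b) (hω : ω ≠ 0) (hν : ν ≠ 0)
    (hcos : cos (ω * (b - a)) = 0) (hsimple : cos (ν * (b - a)) = 0 → ν = ω)
    {Y : ℝ → ℝ} (hY : Continuous Y) (horth : ∫ t in a..b, Y t * cos (ω * (t - a)) = 0) :
    ∃ x : ℝ → ℝ, ContDiff ℝ 4 x ∧
      iteratedDeriv 1 x a = 0 ∧ iteratedDeriv 3 x a = 0 ∧ x b = 0 ∧ iteratedDeriv 2 x b = 0 ∧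
      ∀ s, iteratedDeriv 4 x s + (ω ^ 2 + ν ^ 2) * iteratedDeriv 2 x s + ω ^ 2 * ν ^ 2 * x s
        = Y s := by
  obtain ⟨u, q, hu, hqa, hub, huorth⟩ :=
    exists_isOscillatorSolution_boundary_orthogonal hω hab hcos hY horth
  obtain ⟨x, p, hx, hpa, hxb⟩ :=
    exists_isOscillatorSolution_boundary hν hu.continuous a b
      fun hνcos => hsimple hνcos ▸ huorth
  obtain ⟨hC, hD1, hD2, hD3, hL⟩ := hx.fourthOrder hu hY
  exact ⟨x, hC, by rw [hD1, hpa], by simp [hD3, hqa, hpa], hxb, by simp [hD2, hub, hxb], hL⟩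

theorem stmt_11_general (r : ℝ) (hr : 0 < r)
    (c : ℕ → ℝ)
    (hc : ∀ k : ℕ, c k = -(π / r) ^ 2 * ((2 * (k : ℝ) - 1) / 4) ^ 2)
    (m : ℕ) (hm : 1 ≤ m)
    (ω : ℝ) (hω : ω = ((2 * (m : ℝ) - 1) * π) / (4 * r))
    (e : ℝ → ℝ) (he : e = fun s => 2 * Real.cos (ω * (s + r)))
    (α₀ β₀ : ℝ) (hβ₀ : 0 < β₀)
    (hray : β₀ = -(c m) * α₀ - (c m) ^ 2)
    (hsimple : ∀ k : ℕ, 1 ≤ k → k ≠ m → β₀ ≠ -(c k) * α₀ - (c k) ^ 2)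
    (y : ℝ → ℝ) (hy : ContinuousOn y (Icc (-r) r)) :
    (∃ x : ℝ → ℝ, ContDiff ℝ 4 x ∧
      iteratedDeriv 1 x (-r) = 0 ∧ iteratedDeriv 3 x (-r) = 0 ∧
      x r = 0 ∧ iteratedDeriv 2 x r = 0 ∧
      ∀ s ∈ Icc (-r) r,
        iteratedDeriv 4 x s + α₀ * iteratedDeriv 2 x s + β₀ * x s = y s) ↔
    (∫ s in (-r)..r, y s * e s) = 0 := by
  have hω0 : 0 < ω := by
    rw [hω]; have : (1 : ℝ) ≤ m := by exact_mod_cast hm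
    have := pi_pos; apply div_pos <;> nlinarith
  have hβ : β₀ = ω ^ 2 * (α₀ - ω ^ 2) := by
    rw [hray, hc, hω]; field_simp
  have hcos : cos (ω * (r - -r)) = 0 := by
    rw [show ω * (r - -r) = (2 * m - 1) * π / 2 by rw [hω]; field_simp; ring]
    exact cos_eq_zero_iff.mpr ⟨(m : ℤ) - 1, by push_cast; ring⟩
  have hye : ∫ s in (-r)..r, y s * e s = 2 * ∫ s in (-r)..r, y s * cos (ω * (s - -r)) := by
    rw [← integral_const_mul, he]
    exact integral_congr fun s _ => by simp only [sub_neg_eq_add]; ring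
  have hIcc : uIcc (-r) r = Icc (-r) r := uIcc_of_le (by linarith)
  rw [hye, mul_eq_zero, or_iff_right two_ne_zero]
  constructor
  · rintro ⟨x, hx, h1a, h3a, h0b, h2b, hxy⟩
    rw [← integral_fourthOrder_mul_eq_zero (α := α₀) hx (isOscillatorSolution_cos ω (-r)) h1a h3a
      (by simp) h0b h2b (by simpa using hcos)]
    exact integral_congr fun s hs => by rw [hIcc] at hs; simp only [← hβ, hxy s hs]
  · intro horth
    obtain ⟨Y, hYc, hYy⟩ := hy.exists_continuous_eqOn_Icc (by linarith)
    have hαω : 0 < α₀ - ω ^ 2 := pos_of_mul_pos_right (hβ ▸ hβ₀) (by positivity)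
    set ν := √(α₀ - ω ^ 2)
    have hν0 : 0 < ν := sqrt_pos.mpr hαω
    have hν2 : ν ^ 2 = α₀ - ω ^ 2 := sq_sqrt hαω.le
    -- a resonance `cos (2νr) = 0` puts `(α₀, β₀)` on some ray `l_k`
    have hres : cos (ν * (r - -r)) = 0 → ν = ω := by
      intro hνcos
      obtain ⟨k, hk, hνk⟩ := exists_nat_eq_of_cos_eq_zero (mul_pos hν0 (by linarith)) hνcos
      have hνk' : ν = (2 * k - 1) * π / (4 * r) := by field_simp at hνk ⊢; linarith
      obtain rfl | hkm := eq_or_ne k m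
      · rw [hνk', hω]
      · refine absurd ?_ (hsimple k hk hkm)
        have hck : c k = -ν ^ 2 := by rw [hc, hνk']; field_simp
        rw [hck, hβ]
        linear_combination (ν ^ 2 - ω ^ 2) * hν2
    have hYorth : ∫ t in (-r)..r, Y t * cos (ω * (t - -r)) = 0 := by
      rw [← horth]
      exact integral_congr fun s hs => by rw [hIcc] at hs; simp only [hYy hs]
    obtain ⟨x, hC, h1a, h3a, h0b, h2b, hL⟩ :=
      exists_fourthOrder_solution_boundary (by linarith) hω0.ne' hν0.ne' hcos hres hYc hYorth
    refine ⟨x, hC, h1a, h3a, h0b, h2b, fun s hs => ?_⟩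
    rw [← hYy hs, ← hL s, hβ]
    linear_combination (-(iteratedDeriv 2 x s + ω ^ 2 * x s)) * hν2

/-- At a simple point `(α₀,β₀)` on exactly the ray `l_m`, the equation
`x'''' + α₀x'' + β₀x = y` with the boundary conditions is solvable iff `y ⟂ e_m`. -/
theorem stmt_11 (r : ℝ) (hr : 0 < r)
    (c : ℕ → ℝ)
    (hc : ∀ k : ℕ, c k = -(π / r) ^ 2 * ((2 * (k : ℝ) - 1) / 4) ^ 2)
    (m : ℕ) (hm : 1 ≤ m)
    (ω : ℝ) (hω : ω = ((2 * (m : ℝ) - 1) * π) / (4 * r))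
    (e : ℝ → ℝ) (he : e = fun s => 2 * Real.cos (ω * (s + r)))
    (α₀ β₀ : ℝ) (hα₀ : 0 < α₀) (hβ₀ : 0 < β₀)
    (hray : β₀ = -(c m) * α₀ - (c m) ^ 2)
    (hsimple : ∀ k : ℕ, 1 ≤ k → k ≠ m → β₀ ≠ -(c k) * α₀ - (c k) ^ 2)
    (y : ℝ → ℝ) (hy : ContinuousOn y (Icc (-r) r)) :
    (∃ x : ℝ → ℝ, ContDiff ℝ 4 x ∧
      iteratedDeriv 1 x (-r) = 0 ∧ iteratedDeriv 3 x (-r) = 0 ∧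
      x r = 0 ∧ iteratedDeriv 2 x r = 0 ∧
      ∀ s ∈ Icc (-r) r,
        iteratedDeriv 4 x s + α₀ * iteratedDeriv 2 x s + β₀ * x s = y s) ↔
    (∫ s in (-r)..r, y s * e s) = 0 :=
  stmt_11_general r hr c hc m hm ω hω e he α₀ β₀ hβ₀ hray hsimple y hy
end
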